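/- arXiv:2101.12107 — 2 statements merged into one kernel-verified Lean document; each statement's English description precedes it below -/
import Mathlib

section
/- Let X be a metric space, φ a continuous flow on X over the group ℝ, Γ₂ ⊆ X a nonempty subset with basin of attraction B = B(Γ₂) under φ, and Γ₁ ⊆ X a nonempty subset such that Γ₁ ∩ B ≠ ∅. Then the following two conditions are equivalent: (i) [irreversible P-tipping from Γ₁ upon a single switch to the frozen system φ] there exist points x_a, x_b ∈ Γ₁ such that infDist(φ(t, x_a), Γ₂) → 0 as t → +∞ and φ(t, x_b) ∉ closure(B) for all t > 0; (ii) [basin instability] Γ₁ is not contained in closure(B). -/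
/-!
The basin of `Γ₂`, and therefore its closure, is invariant under the flow; since every time-`t`
map is invertible, `φ (t, x)` lies in an invariant set exactly when `x` does. So a point of `Γ₁`
never enters `closure B` in positive time iff it lies outside `closure B`, while the
intersection condition already supplies a point of `Γ₁` attracted to `Γ₂`.
-/

open Filter Metric Topology

namespace Flow

variable {τ X : Type*} [TopologicalSpace τ] [TopologicalSpace X]

theorem isInvariant_closure [AddZero τ] (ϕ : Flow τ X) {s : Set X} (hs : IsInvariant ϕ s) :
    IsInvariant ϕ (closure s) :=
  fun t => (hs t).closure (ϕ.continuous_toFun t)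

theorem apply_mem_iff [AddGroup τ] (ϕ : Flow τ X) {s : Set X} (hs : IsInvariant ϕ s) (t : τ)
    (x : X) : ϕ t x ∈ s ↔ x ∈ s := by
  have h := (ϕ.isInvariant_iff_image_eq s).1 hs (-t)
  rw [image_eq_preimage_symm, neg_neg] at h
  exact Set.ext_iff.1 h x

theorem forall_pos_apply_notMem_iff [AddGroup τ] [Preorder τ] [NoMaxOrder τ] (ϕ : Flow τ X)
    {s : Set X} (hs : IsInvariant ϕ s) (x : X) : (∀ t, 0 < t → ϕ t x ∉ s) ↔ x ∉ s := by
  simp only [ϕ.apply_mem_iff hs]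
  obtain ⟨t, ht⟩ := exists_gt (0 : τ)
  exact ⟨fun h => h t ht, fun h _ _ => h⟩

def basin [PseudoMetricSpace X] [Preorder τ] [AddZero τ] (ϕ : Flow τ X) (Γ : Set X) : Set X :=
  {x | Tendsto (fun t => infDist (ϕ t x) Γ) atTop (𝓝 0)}

theorem isInvariant_basin [PseudoMetricSpace X] [AddCommGroup τ] [PartialOrder τ]
    [IsOrderedAddMonoid τ] (ϕ : Flow τ X) (Γ : Set X) : IsInvariant ϕ (ϕ.basin Γ) := by
  intro t x hx
  show Tendsto (fun s => infDist (ϕ s (ϕ t x)) Γ) atTop (𝓝 0)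
  simpa only [Function.comp_def, id, ϕ.map_add] using
    hx.comp (tendsto_atTop_add_const_right atTop t tendsto_id)

end Flow

theorem ptipping_iff_basin_instability_general
    {X : Type*} [MetricSpace X]
    (φ : ℝ × X → X)
    (hcont : Continuous φ)
    (h0 : ∀ x : X, φ (0, x) = x)
    (hadd : ∀ t s : ℝ, ∀ x : X, φ (t + s, x) = φ (t, φ (s, x)))
    (Γ₂ : Set X)
    (B : Set X)
    (hB : B = {x : X | Tendsto (fun t : ℝ => infDist (φ (t, x)) Γ₂) atTop (nhds 0)})
    (Γ₁ : Set X)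
    (hint : (Γ₁ ∩ B).Nonempty) :
    ((∃ xa ∈ Γ₁, Tendsto (fun t : ℝ => infDist (φ (t, xa)) Γ₂) atTop (nhds 0)) ∧
        (∃ xb ∈ Γ₁, ∀ t : ℝ, 0 < t → φ (t, xb) ∉ closure B)) ↔
      ¬ Γ₁ ⊆ closure B := by
  let ϕ : Flow ℝ X := ⟨fun t x => φ (t, x), hcont, hadd, h0⟩
  have hB_basin : B = ϕ.basin Γ₂ := hB
  have hclosure : IsInvariant ϕ (closure B) :=
    hB_basin ▸ ϕ.isInvariant_closure (ϕ.isInvariant_basin Γ₂)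
  obtain ⟨xa, hxaΓ₁, hxaB⟩ := hint
  have hxa : ∃ xa ∈ Γ₁, Tendsto (fun t : ℝ => infDist (φ (t, xa)) Γ₂) atTop (nhds 0) :=
    ⟨xa, hxaΓ₁, (hB_basin ▸ hxaB : xa ∈ ϕ.basin Γ₂)⟩
  simp only [Set.not_subset, true_and, hxa]
  exact exists_congr fun x => and_congr_right fun _ => ϕ.forall_pos_apply_notMem_iff hclosure x

/-- Irreversible P-tipping from `Γ₁` upon a single switch to the frozen system `φ`
(with base attractor `Γ₂` and basin `B = B(Γ₂)`) occurs if and only if `Γ₁` is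
basin unstable, i.e. `Γ₁ ⊄ closure B`, given the partial-basin-instability
intersection condition `Γ₁ ∩ B ≠ ∅`. -/
theorem ptipping_iff_basin_instability
    {X : Type*} [MetricSpace X]
    (φ : ℝ × X → X)
    (hcont : Continuous φ)
    (h0 : ∀ x : X, φ (0, x) = x)
    (hadd : ∀ t s : ℝ, ∀ x : X, φ (t + s, x) = φ (t, φ (s, x)))
    (Γ₂ : Set X) (hΓ₂ : Γ₂.Nonempty)
    (B : Set X)
    (hB : B = {x : X | Tendsto (fun t : ℝ => infDist (φ (t, x)) Γ₂) atTop (nhds 0)})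
    (Γ₁ : Set X) (hΓ₁ : Γ₁.Nonempty)
    (hint : (Γ₁ ∩ B).Nonempty) :
    ((∃ xa ∈ Γ₁, Tendsto (fun t : ℝ => infDist (φ (t, xa)) Γ₂) atTop (nhds 0)) ∧
        (∃ xb ∈ Γ₁, ∀ t : ℝ, 0 < t → φ (t, xb) ∉ closure B)) ↔
      ¬ Γ₁ ⊆ closure B :=
  ptipping_iff_basin_instability_general φ hcont h0 hadd Γ₂ B hB Γ₁ hint
end

section
/- Consider the May vector field G with positive parameters r, c, α, β, s, q, μ, ν, ε. Then G is Fréchet differentiable at the extinction equilibrium e₀ = (0, ε/q), and its derivative there is the lower-triangular linear map (n, p) ↦ ( (−r·μ/ν − α·ε/(q·β))·n, (s/q)·n − s·p ). In particular, both eigenvalues −r·μ/ν − α·ε/(q·β) and −s of the linearization at e₀ are negative for all positive parameter values. -/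
/-- The May (Leslie–Gower–May) vector field. -/
noncomputable def MayField (r c α β s q μ ν ε : ℝ) (x : ℝ × ℝ) : ℝ × ℝ :=
  (r * x.1 * (1 - c / r * x.1) * ((x.1 - μ) / (ν + x.1)) - α * x.1 * x.2 / (β + x.1),
   s * x.2 * (1 - q * x.2 / (x.1 + ε)))

/-!
Each component of the May field is a product one of whose factors vanishes at `e₀`: the prey
component is `N` times the prey per-capita growth rate, and near `e₀` the predator component is
`(N + ε - q P) · s P / (N + ε)`. At a zero of one factor the product rule leaves only the value of
the other factor times the derivative of the vanishing one, which gives the two rows of the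
Jacobian. It is lower triangular, so its eigenvalues are the diagonal entries.
-/

open Topology ContinuousLinearMap

theorem HasFDerivAt.mul_of_eq_zero {𝕜 E 𝔸 : Type*} [NontriviallyNormedField 𝕜]
    [NormedAddCommGroup E] [NormedSpace 𝕜 E] [NormedCommRing 𝔸] [NormedAlgebra 𝕜 𝔸]
    {f g : E → 𝔸} {f' : E →L[𝕜] 𝔸} {x : E}
    (hf : HasFDerivAt f f' x) (hg : DifferentiableAt 𝕜 g x) (hfx : f x = 0) :
    HasFDerivAt (fun y => f y * g y) (g x • f') x := by
  convert hf.fun_mul hg.hasFDerivAt using 1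
  ext v
  simp [hfx]

noncomputable def mayPreyRate (r c α β μ ν : ℝ) (x : ℝ × ℝ) : ℝ :=
  r * (1 - c / r * x.1) * ((x.1 - μ) / (ν + x.1)) - α * x.2 / (β + x.1)

section MayField

variable {r c α β s q μ ν ε : ℝ} {x : ℝ × ℝ}

theorem mayField_fst_eq_mul :
    (MayField r c α β s q μ ν ε x).1 = x.1 * mayPreyRate r c α β μ ν x := by
  simp only [MayField, mayPreyRate]
  ring

theorem differentiableAt_mayPreyRate (hν : ν + x.1 ≠ 0) (hβ : β + x.1 ≠ 0) :
    DifferentiableAt ℝ (mayPreyRate r c α β μ ν) x := by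
  unfold mayPreyRate
  fun_prop (disch := assumption)

theorem hasFDerivAt_mayField_fst (hx : x.1 = 0) (hν : ν ≠ 0) (hβ : β ≠ 0) :
    HasFDerivAt (fun y => (MayField r c α β s q μ ν ε y).1)
      (mayPreyRate r c α β μ ν x • fst ℝ ℝ ℝ) x := by
  simp only [mayField_fst_eq_mul]
  exact hasFDerivAt_fst.mul_of_eq_zero
    (differentiableAt_mayPreyRate (by rwa [hx, add_zero]) (by rwa [hx, add_zero])) hx

theorem mayField_snd_eventuallyEq (hx : x.1 + ε ≠ 0) :
    (fun y => (MayField r c α β s q μ ν ε y).2) =ᶠ[𝓝 x]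
      fun y => (y.1 + ε - q * y.2) * (s * y.2 / (y.1 + ε)) := by
  have hcont : Continuous fun y : ℝ × ℝ => y.1 + ε := by fun_prop
  filter_upwards [hcont.continuousAt.eventually_ne hx] with y hy
  simp only [MayField]
  field_simp

theorem hasFDerivAt_mayField_snd (hx : x.1 + ε = q * x.2) (hxε : x.1 + ε ≠ 0) :
    HasFDerivAt (fun y => (MayField r c α β s q μ ν ε y).2)
      ((s * x.2 / (x.1 + ε)) • (fst ℝ ℝ ℝ - q • snd ℝ ℝ ℝ)) x := by
  have hlin : HasFDerivAt (fun y : ℝ × ℝ => y.1 + ε - q * y.2) (fst ℝ ℝ ℝ - q • snd ℝ ℝ ℝ) x :=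
    (hasFDerivAt_fst.add_const ε).sub (hasFDerivAt_snd.const_mul q)
  have hrate : DifferentiableAt ℝ (fun y : ℝ × ℝ => s * y.2 / (y.1 + ε)) x := by
    fun_prop (disch := assumption)
  exact (hlin.mul_of_eq_zero hrate (sub_eq_zero.2 hx)).congr_of_eventuallyEq
    (mayField_snd_eventuallyEq hxε)

end MayField

theorem May_linearization_at_extinction_general
    (r c α β s q μ ν ε : ℝ)
    (hr : 0 < r) (hα : 0 < α) (hβ : 0 < β)
    (hs : 0 < s) (hq : 0 < q) (hμ : 0 < μ) (hν : 0 < ν) (hε : 0 < ε) :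
    HasFDerivAt (MayField r c α β s q μ ν ε)
      (((-(r * μ / ν) - α * ε / (q * β)) • ContinuousLinearMap.fst ℝ ℝ ℝ).prod
        ((s / q) • ContinuousLinearMap.fst ℝ ℝ ℝ +
          (-s) • ContinuousLinearMap.snd ℝ ℝ ℝ)) ((0 : ℝ), ε / q) ∧
    -(r * μ / ν) - α * ε / (q * β) < 0 ∧ -s < 0 := by
  have hprey : HasFDerivAt (fun y => (MayField r c α β s q μ ν ε y).1)
      ((-(r * μ / ν) - α * ε / (q * β)) • fst ℝ ℝ ℝ) ((0 : ℝ), ε / q) := by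
    refine (hasFDerivAt_mayField_fst rfl hν.ne' hβ.ne').congr_fderiv ?_
    congr 1
    simp only [mayPreyRate]
    ring
  have hpred : HasFDerivAt (fun y => (MayField r c α β s q μ ν ε y).2)
      ((s / q) • fst ℝ ℝ ℝ + (-s) • snd ℝ ℝ ℝ) ((0 : ℝ), ε / q) := by
    refine (hasFDerivAt_mayField_snd ?_ (by simpa using hε.ne')).congr_fderiv ?_
    · simp [field]
    · ext <;> simp <;> field_simp
  refine ⟨hprey.prodMk hpred, ?_, by linarith⟩
  have hallee : 0 < r * μ / ν := by positivity
  have hpredation : 0 < α * ε / (q * β) := by positivity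
  linarith

/-- The May vector field is Fréchet differentiable at the extinction equilibrium
`e₀ = (0, ε/q)` with lower-triangular derivative
`(n, p) ↦ ((−rμ/ν − αε/(qβ))·n, (s/q)·n − s·p)`; both eigenvalues
`−rμ/ν − αε/(qβ)` and `−s` are negative. -/
theorem May_linearization_at_extinction
    (r c α β s q μ ν ε : ℝ)
    (hr : 0 < r) (hc : 0 < c) (hα : 0 < α) (hβ : 0 < β)
    (hs : 0 < s) (hq : 0 < q) (hμ : 0 < μ) (hν : 0 < ν) (hε : 0 < ε) :
    HasFDerivAt (MayField r c α β s q μ ν ε)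
      (((-(r * μ / ν) - α * ε / (q * β)) • ContinuousLinearMap.fst ℝ ℝ ℝ).prod
        ((s / q) • ContinuousLinearMap.fst ℝ ℝ ℝ +
          (-s) • ContinuousLinearMap.snd ℝ ℝ ℝ)) ((0 : ℝ), ε / q) ∧
    -(r * μ / ν) - α * ε / (q * β) < 0 ∧ -s < 0 :=
  May_linearization_at_extinction_general r c α β s q μ ν ε hr hα hβ hs hq hμ hν hε
end
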